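/- arXiv:0803.1283 — 3 statements merged into one kernel-verified Lean document; each statement's English description precedes it below -/
import Mathlib

section
/- Let X be a Banach space, M ≥ 1, and F ∈ 𝓕^X_{M,0} (i.e. a = 0), and fix t > 0. Then for every g ∈ X one has lim (F(t/k)^i − F(t/k)^l)g = 0 as |i−l|/k → 0; precisely: for every ε > 0 there exists δ > 0 such that for all i, l, k ∈ ℕ with 0 < |i−l|/k < δ, ‖F(t/k)^i g − F(t/k)^l g‖ < ε. -/
open Filter Topology MeasureTheory

noncomputable section

variable {X : Type*} [NormedAddCommGroup X] [NormedSpace ℝ X] [CompleteSpace X]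

/-- `y` is the value of the strong derivative at `0` of `F : [0,∞) → L(X)` at `ψ`. -/
def DerivAtZero (F : ℝ → (X →L[ℝ] X)) (ψ y : X) : Prop :=
  Tendsto (fun h : ℝ => h⁻¹ • (F h ψ - F 0 ψ)) (𝓝[>] (0 : ℝ)) (𝓝 y)

/-- The class `𝓕^X_{M,a}`. -/
def MemFClass (F : ℝ → (X →L[ℝ] X)) (M a : ℝ) : Prop :=
  F 0 = 1 ∧
    (∀ n m : ℕ, 0 < n → 0 < m → ∀ s : ℝ, 0 ≤ s →
      ‖(F (s / n)) ^ m‖ ≤ M * Real.exp (a * m * s / n)) ∧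
    Dense {ψ : X | ∃ y, DerivAtZero F ψ y}

/-- The class `𝓕_X`. -/
def MemF (F : ℝ → (X →L[ℝ] X)) : Prop := ∃ M, 1 ≤ M ∧ ∃ a : ℝ, MemFClass F M a

/-- The adjoint of a bounded operator, acting on the dual space. -/
noncomputable def adjCLM (T : X →L[ℝ] X) :
    StrongDual ℝ X →L[ℝ] StrongDual ℝ X :=
  LinearMap.mkContinuous
    { toFun := fun φ => φ.comp T
      map_add' := fun φ ψ => by ext x; simp
      map_smul' := fun c φ => by ext x; simp }
    ‖T‖ (fun φ => by simpa [mul_comm] using φ.opNorm_comp_le T)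

/-- `ψ` is the value at `φ` of the strong derivative at `0` of `s ↦ F(s)*`. -/
def AdjDerivAtZero (F : ℝ → (X →L[ℝ] X)) (φ ψ : StrongDual ℝ X) : Prop :=
  Tendsto (fun h : ℝ => h⁻¹ • (adjCLM (F h) φ - adjCLM (F 0) φ)) (𝓝[>] (0 : ℝ)) (𝓝 ψ)

/-- A `C₀`-semigroup on `X` (as a function on `[0,∞)`, modelled on all of `ℝ`). -/
def IsC0Semigroup (S : ℝ → (X →L[ℝ] X)) : Prop :=
  S 0 = 1 ∧ (∀ a b : ℝ, 0 ≤ a → 0 ≤ b → S (a + b) = S a * S b) ∧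
    (∀ x : X, ContinuousOn (fun s => S s x) (Set.Ici (0 : ℝ))) ∧
    ∃ M, 1 ≤ M ∧ ∃ w : ℝ, ∀ s : ℝ, 0 ≤ s → ‖S s‖ ≤ M * Real.exp (w * s)

/-- `Z` is the generator of the semigroup `S`: the strong derivative of `S` at `0`,
with its maximal domain, coincides with `Z`. -/
def IsGeneratorOf (S : ℝ → (X →L[ℝ] X)) (Z : X →ₗ.[ℝ] X) : Prop :=
  ∀ x y : X, DerivAtZero S x y ↔ ∃ hx : x ∈ Z.domain, Z ⟨x, hx⟩ = y

/-- Every subsequence of `u` has a weakly convergent subsubsequence. -/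
def WeakSubCvg (u : ℕ → X) : Prop :=
  ∀ k : ℕ → ℕ, StrictMono k → ∃ j : ℕ → ℕ, StrictMono j ∧ ∃ L : X,
    ∀ φ : StrongDual ℝ X, Tendsto (fun i => φ (u (k (j i)))) atTop (𝓝 (φ L))

/-- `(f, y)` belongs to the closure of the graph of `F'(0)`. -/
def InClosureGraphF (F : ℝ → (X →L[ℝ] X)) (f y : X) : Prop :=
  (f, y) ∈ closure {p : X × X | DerivAtZero F p.1 p.2}

/-!
Pick `ψ` in the domain of `F'(0)` close to `g`. For the power-bounded operator `T = F(t/k)` the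
telescoping sum `T^i ψ - T^l ψ = ∑_{l ≤ j < i} T^j (Tψ - ψ)` gives
`‖T^i g - T^l g‖ ≤ 2M‖g - ψ‖ + |i - l| M ‖Tψ - ψ‖`, and differentiability of `F(·)ψ` at `0` gives
`‖F(t/k)ψ - ψ‖ = O(t/k)`, so the second term is `O(|i - l|/k)`.
-/

open Filter Topology

section PowerBounded

variable {𝕜 E : Type*} [NontriviallyNormedField 𝕜] [NormedAddCommGroup E] [NormedSpace 𝕜 E]
  {T : E →L[𝕜] E} {C : ℝ}

theorem norm_pow_apply_sub_pow_apply_le (hT : ∀ m : ℕ, ‖T ^ m‖ ≤ C) (x : E) (i l : ℕ) :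
    ‖(T ^ i) x - (T ^ l) x‖ ≤ |(i : ℝ) - l| * C * ‖T x - x‖ := by
  wlog hli : l ≤ i generalizing i l
  · rw [norm_sub_rev, abs_sub_comm]
    exact this l i (by omega)
  have htelescope : (T ^ i) x - (T ^ l) x = ∑ j ∈ Finset.Ico l i, (T ^ j) (T x - x) := by
    rw [← Finset.sum_Ico_sub (fun j => (T ^ j) x) hli]
    refine Finset.sum_congr rfl fun j _ => ?_
    rw [map_sub, pow_succ]
    rfl
  calc ‖(T ^ i) x - (T ^ l) x‖ ≤ ∑ j ∈ Finset.Ico l i, ‖(T ^ j) (T x - x)‖ :=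
        htelescope ▸ norm_sum_le _ _
    _ ≤ ∑ _j ∈ Finset.Ico l i, C * ‖T x - x‖ :=
        Finset.sum_le_sum fun j _ => (T ^ j).le_of_opNorm_le (hT j) _
    _ = |(i : ℝ) - l| * C * ‖T x - x‖ := by
        rw [Finset.sum_const, Nat.card_Ico, nsmul_eq_mul, Nat.cast_sub hli,
          abs_of_nonneg (sub_nonneg.mpr (Nat.cast_le.mpr hli)), mul_assoc]

theorem norm_pow_apply_sub_pow_apply_le_of_approx (hT : ∀ m : ℕ, ‖T ^ m‖ ≤ C) (g ψ : E)
    (i l : ℕ) :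
    ‖(T ^ i) g - (T ^ l) g‖ ≤ 2 * C * ‖g - ψ‖ + |(i : ℝ) - l| * C * ‖T ψ - ψ‖ := by
  have hsplit : (T ^ i) g - (T ^ l) g =
      ((T ^ i) (g - ψ) - (T ^ l) (g - ψ)) + ((T ^ i) ψ - (T ^ l) ψ) := by
    simp only [map_sub]; abel
  calc ‖(T ^ i) g - (T ^ l) g‖
      ≤ (‖(T ^ i) (g - ψ)‖ + ‖(T ^ l) (g - ψ)‖) + ‖(T ^ i) ψ - (T ^ l) ψ‖ := by
        rw [hsplit]
        exact (norm_add_le _ _).trans (add_le_add_left (norm_sub_le _ _) _)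
    _ ≤ (C * ‖g - ψ‖ + C * ‖g - ψ‖) + |(i : ℝ) - l| * C * ‖T ψ - ψ‖ := by
        gcongr
        exacts [(T ^ i).le_of_opNorm_le (hT i) _, (T ^ l).le_of_opNorm_le (hT l) _,
          norm_pow_apply_sub_pow_apply_le hT ψ i l]
    _ = 2 * C * ‖g - ψ‖ + |(i : ℝ) - l| * C * ‖T ψ - ψ‖ := by ring

end PowerBounded

theorem eventually_norm_sub_le_of_tendsto_slope {E : Type*} [NormedAddCommGroup E]
    [NormedSpace ℝ E] {f : ℝ → E} {y : E}
    (hf : Tendsto (fun h : ℝ => h⁻¹ • (f h - f 0)) (𝓝[>] 0) (𝓝 y)) :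
    ∀ᶠ h in 𝓝[>] 0, ‖f h - f 0‖ ≤ (‖y‖ + 1) * h := by
  filter_upwards [hf.norm.eventually (gt_mem_nhds (lt_add_one ‖y‖)), self_mem_nhdsWithin]
    with h hslope (hpos : 0 < h)
  rw [norm_smul, norm_inv, Real.norm_of_nonneg hpos.le, inv_mul_lt_iff₀ hpos] at hslope
  linarith

omit [CompleteSpace X] in
theorem MemFClass.norm_pow_le {F : ℝ → (X →L[ℝ] X)} {M : ℝ} (hF : MemFClass F M 0)
    (hM : 1 ≤ M) {t : ℝ} (ht : 0 ≤ t) {k : ℕ} (hk : 0 < k) (m : ℕ) :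
    ‖F (t / k) ^ m‖ ≤ M := by
  rcases Nat.eq_zero_or_pos m with rfl | hm
  · exact (pow_zero (F (t / k))).symm ▸ ContinuousLinearMap.norm_id_le.trans hM
  · simpa using hF.2.1 k m hk hm t ht

/-- Lemma 2: for `F ∈ 𝓕^X_{M,0}` and `t > 0`,
`(F(t/k)^i − F(t/k)^l)g → 0` as `|i − l|/k → 0`, for every `g ∈ X`. -/
theorem chernoff_lemma2 (F : ℝ → (X →L[ℝ] X)) (M : ℝ) (hM : 1 ≤ M)
    (hF : MemFClass F M 0) (t : ℝ) (ht : 0 < t) (g : X) :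
    ∀ ε > 0, ∃ δ > 0, ∀ i l k : ℕ, 0 < i → 0 < l → 0 < k →
      0 < |(i : ℝ) - l| / k → |(i : ℝ) - l| / k < δ →
      ‖((F (t / k)) ^ i) g - ((F (t / k)) ^ l) g‖ < ε := by
  intro ε hε
  have hMpos : 0 < M := by linarith
  obtain ⟨ψ, hψg, y, hψ⟩ := Metric.dense_iff.mp hF.2.2 g (ε / (4 * M)) (by positivity)
  obtain ⟨h₀, hh₀ : 0 < h₀, hlin⟩ :=
    mem_nhdsGT_iff_exists_Ioo_subset.mp (eventually_norm_sub_le_of_tendsto_slope hψ)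
  refine ⟨min (h₀ / t) (ε / (2 * M * t * (‖y‖ + 1))), by positivity, ?_⟩
  intro i l k _ _ hk hpos hlt
  have hkpos : (0 : ℝ) < k := Nat.cast_pos.mpr hk
  have hil : 1 ≤ |(i : ℝ) - l| := by
    have hne : (i : ℤ) - l ≠ 0 := fun h => by simp_all [sub_eq_zero]
    exact_mod_cast Int.one_le_abs hne
  have hstep : t / k < h₀ := by
    calc t / k = t * (1 / k) := by ring
      _ ≤ t * (|(i : ℝ) - l| / k) := by gcongr
      _ < t * (h₀ / t) := mul_lt_mul_of_pos_left (hlt.trans_le (min_le_left _ _)) ht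
      _ = h₀ := by field_simp
  have hFψ : ‖F (t / k) ψ - ψ‖ ≤ (‖y‖ + 1) * (t / k) := by
    simpa [hF.1] using hlin ⟨by positivity, hstep⟩
  have hgψ : ‖g - ψ‖ < ε / (4 * M) := by rwa [← dist_eq_norm, dist_comm]
  calc ‖(F (t / k) ^ i) g - (F (t / k) ^ l) g‖
      ≤ 2 * M * ‖g - ψ‖ + |(i : ℝ) - l| * M * ‖F (t / k) ψ - ψ‖ :=
        norm_pow_apply_sub_pow_apply_le_of_approx (hF.norm_pow_le hM ht.le hk) g ψ i l
    _ ≤ 2 * M * ‖g - ψ‖ + |(i : ℝ) - l| * M * ((‖y‖ + 1) * (t / k)) := by gcongr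
    _ = 2 * M * ‖g - ψ‖ + |(i : ℝ) - l| / k * (M * t * (‖y‖ + 1)) := by ring
    _ < 2 * M * (ε / (4 * M)) + ε / (2 * M * t * (‖y‖ + 1)) * (M * t * (‖y‖ + 1)) := by
        gcongr 2 * M * ?_ + ?_ * _
        exact hlt.trans_le (min_le_right _ _)
    _ = ε := by field_simp; ring
end
end

section
/- Let X be a Banach space, M ≥ 1, and F ∈ 𝓕^X_{M,0} (i.e. a = 0), and fix t > 0. Then for every g ∈ D(F'(0)) one has lim [ (F(t/k)^i − F(t/k)^l)g / ((i−l)·t/k) − F(t/k)^{min(i,l)} F'(0)g ] = 0 as |i−l|/k → 0; precisely: for every ε > 0 there exists δ > 0 such that for all i, l, k ∈ ℕ with i ≠ l and 0 < |i−l|/k < δ, ‖(F(t/k)^i g − F(t/k)^l g)·(k/((i−l)t)) − F(t/k)^{min(i,l)} F'(0)g‖ < ε. -/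
open Filter Topology MeasureTheory

noncomputable section

variable {X : Type*} [NormedAddCommGroup X] [NormedSpace ℝ X] [CompleteSpace X]

/-!
Put `s = t / k`, `T = F s` and `n = |i - l|`. The quotient in question is `T ^ min i l` applied to
`(T ^ n g - g) / (n s)`, and telescoping writes `(T ^ n g - g) / (n s) - y` as the average over
`j < n` of `T ^ j ((T g - g) / s - y) + (T ^ j y - y)`. Since `a = 0`, the defining bound of the
class at `s / 1` gives `‖F s ^ j‖ ≤ M` for all `s ≥ 0` and all `j`, so the first term is small as
`s ≤ n s → 0` and `g ∈ D(F'(0))`. The second is small uniformly in `j s ≤ n s → 0`: for `z` in the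
dense domain of `F'(0)`, `‖T ^ j z - z‖ ≤ j M ‖T z - z‖ = O(j s)`, and density and power-boundedness
carry this over to every `y`.
-/

section PowerBounded

variable {E : Type*} [NormedAddCommGroup E] [NormedSpace ℝ E]

lemma sum_range_pow_apply_sub_self (T : E →L[ℝ] E) (g : E) (n : ℕ) :
    ∑ j ∈ Finset.range n, (T ^ j) (T g - g) = (T ^ n) g - g := by
  have htel := Finset.sum_range_sub (fun j => (T ^ j) g) n
  rw [pow_zero, one_apply_eq_self] at htel
  rw [← htel]
  refine Finset.sum_congr rfl fun j _ => ?_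
  rw [map_sub, pow_succ]
  rfl

lemma norm_pow_apply_sub_self_le {T : E →L[ℝ] E} {C : ℝ} (hT : ∀ j : ℕ, ‖T ^ j‖ ≤ C)
    (z : E) (n : ℕ) : ‖(T ^ n) z - z‖ ≤ n * (C * ‖T z - z‖) := by
  rw [← sum_range_pow_apply_sub_self]
  calc ‖∑ j ∈ Finset.range n, (T ^ j) (T z - z)‖
      ≤ ∑ j ∈ Finset.range n, ‖(T ^ j) (T z - z)‖ := norm_sum_le _ _
    _ ≤ ∑ _j ∈ Finset.range n, C * ‖T z - z‖ :=
        Finset.sum_le_sum fun j _ => (T ^ j).le_of_opNorm_le (hT j) _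
    _ = n * (C * ‖T z - z‖) := by simp

def powDiffQuot (T : E →L[ℝ] E) (s : ℝ) (n : ℕ) (g : E) : E :=
  ((n : ℝ) * s)⁻¹ • ((T ^ n) g - g)

lemma powDiffQuot_sub_eq_average (T : E →L[ℝ] E) {s : ℝ} {n : ℕ} (hn : n ≠ 0) (g y : E) :
    powDiffQuot T s n g - y =
      (n : ℝ)⁻¹ • ∑ j ∈ Finset.range n, ((T ^ j) (s⁻¹ • (T g - g)) - y) := by
  simp only [powDiffQuot, Finset.sum_sub_distrib, map_smul, ← Finset.smul_sum,
    sum_range_pow_apply_sub_self, Finset.sum_const, Finset.card_range]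
  match_scalars <;> field_simp

lemma norm_powDiffQuot_sub_lt {T : E →L[ℝ] E} {C : ℝ} (hT : ∀ j : ℕ, ‖T ^ j‖ ≤ C)
    (s : ℝ) {n : ℕ} (hn : n ≠ 0) {g y : E} {b : ℝ} (hb : ∀ j < n, ‖(T ^ j) y - y‖ < b) :
    ‖powDiffQuot T s n g - y‖ < C * ‖s⁻¹ • (T g - g) - y‖ + b := by
  set u := s⁻¹ • (T g - g)
  have hterm : ∀ j < n, ‖(T ^ j) u - y‖ < C * ‖u - y‖ + b := fun j hj =>
    calc ‖(T ^ j) u - y‖ = ‖(T ^ j) (u - y) + ((T ^ j) y - y)‖ := by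
          rw [map_sub]; abel_nf
      _ ≤ ‖(T ^ j) (u - y)‖ + ‖(T ^ j) y - y‖ := norm_add_le _ _
      _ < C * ‖u - y‖ + b := add_lt_add_of_le_of_lt ((T ^ j).le_of_opNorm_le (hT j) _) (hb j hj)
  rw [powDiffQuot_sub_eq_average T hn, norm_smul, norm_inv, Real.norm_natCast,
    inv_mul_lt_iff₀ (by positivity)]
  calc ‖∑ j ∈ Finset.range n, ((T ^ j) u - y)‖
      ≤ ∑ j ∈ Finset.range n, ‖(T ^ j) u - y‖ := norm_sum_le _ _
    _ < ∑ _j ∈ Finset.range n, (C * ‖u - y‖ + b) :=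
        Finset.sum_lt_sum_of_nonempty (by simpa using hn) fun j hj =>
          hterm j (Finset.mem_range.mp hj)
    _ = n * (C * ‖u - y‖ + b) := by simp [mul_add]

lemma smul_pow_apply_sub_pow_apply_eq {i l : ℕ} (hil : i ≠ l) (T : E →L[ℝ] E) (s : ℝ) (g : E) :
    (((i : ℝ) - l) * s)⁻¹ • ((T ^ i) g - (T ^ l) g) =
      (T ^ min i l) (powDiffQuot T s ((i : ℤ) - l).natAbs g) := by
  have shift : ∀ m n : ℕ, ((((m + n : ℕ) : ℝ) - m) * s)⁻¹ • ((T ^ (m + n)) g - (T ^ m) g) =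
      (T ^ m) (powDiffQuot T s n g) := by
    intro m n
    rw [Nat.cast_add, add_sub_cancel_left, powDiffQuot, map_smul, pow_add, map_sub]
    rfl
  rcases hil.lt_or_gt with h | h
  · obtain ⟨n, rfl⟩ : ∃ n, l = i + n := ⟨l - i, by omega⟩
    rw [min_eq_left (by omega), ← shift, ← neg_sub ((T ^ i) g), ← neg_sub (i : ℝ), neg_mul,
      inv_neg, neg_smul_neg]
    simp
  · obtain ⟨n, rfl⟩ : ∃ n, i = l + n := ⟨i - l, by omega⟩
    rw [min_eq_right (by omega), ← shift]
    simp

variable {F : ℝ → (E →L[ℝ] E)}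

lemma MemFClass.norm_pow_le_s2 {M : ℝ} (hF : MemFClass F M 0) {s : ℝ} (hs : 0 ≤ s) (j : ℕ) :
    ‖F s ^ j‖ ≤ M := by
  rcases j.eq_zero_or_pos with rfl | hj
  · simpa [hF.1] using hF.2.1 1 1 one_pos one_pos 0 le_rfl
  · simpa using hF.2.1 1 j one_pos hj s hs

lemma DerivAtZero.exists_norm_sub_lt (hF0 : F 0 = 1) {g y : E} (hg : DerivAtZero F g y)
    {ε : ℝ} (hε : 0 < ε) : ∃ δ > 0, ∀ s : ℝ, 0 < s → s < δ → ‖s⁻¹ • (F s g - g) - y‖ < ε := by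
  obtain ⟨δ, hδ, hd⟩ := Metric.tendsto_nhdsWithin_nhds.mp hg ε hε
  refine ⟨δ, hδ, fun s hs hsδ => ?_⟩
  simpa [hF0, dist_eq_norm] using hd hs (by simpa [abs_of_pos hs] using hsδ)

lemma DerivAtZero.exists_norm_apply_sub_le (hF0 : F 0 = 1) {z w : E} (hz : DerivAtZero F z w) :
    ∃ δ > 0, ∀ s : ℝ, 0 < s → s < δ → ‖F s z - z‖ ≤ (‖w‖ + 1) * s := by
  obtain ⟨δ, hδ, hd⟩ := hz.exists_norm_sub_lt hF0 one_pos
  refine ⟨δ, hδ, fun s hs hsδ => ?_⟩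
  have hquot : ‖s⁻¹ • (F s z - z)‖ ≤ ‖w‖ + 1 := by
    linarith [norm_le_norm_add_norm_sub' (s⁻¹ • (F s z - z)) w, hd s hs hsδ]
  rwa [norm_smul, norm_inv, Real.norm_of_nonneg hs.le, inv_mul_le_iff₀ hs, mul_comm] at hquot

lemma exists_norm_pow_apply_sub_self_lt (hF0 : F 0 = 1) {C : ℝ}
    (hpow : ∀ s : ℝ, 0 ≤ s → ∀ j : ℕ, ‖F s ^ j‖ ≤ C)
    (hdense : Dense {ψ : E | ∃ y, DerivAtZero F ψ y})
    (y : E) {ε : ℝ} (hε : 0 < ε) :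
    ∃ δ > 0, ∀ s : ℝ, 0 < s → ∀ j : ℕ, j * s < δ → ‖(F s ^ j) y - y‖ < ε := by
  have hC : 0 ≤ C := (norm_nonneg _).trans (hpow 0 le_rfl 0)
  obtain ⟨z, ⟨w, hzw⟩, hyz⟩ := hdense.exists_dist_lt y (by positivity : 0 < ε / (2 * (C + 1)))
  obtain ⟨δ₀, hδ₀, hz⟩ := hzw.exists_norm_apply_sub_le hF0
  set K := C * (‖w‖ + 1)
  have hK : 0 ≤ K := by positivity
  refine ⟨min δ₀ (ε / (2 * (K + 1))), by positivity, fun s hs j hjs => ?_⟩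
  rcases j.eq_zero_or_pos with rfl | hj
  · simpa using hε
  have hsj : s ≤ j * s := le_mul_of_one_le_left hs.le (by exact_mod_cast hj)
  have hjs₀ : j * s < δ₀ := hjs.trans_le (min_le_left _ _)
  have hjs₁ : j * s < ε / (2 * (K + 1)) := hjs.trans_le (min_le_right _ _)
  set T := F s
  have hTz : ‖(T ^ j) z - z‖ ≤ K * (j * s) :=
    calc ‖(T ^ j) z - z‖ ≤ j * (C * ‖T z - z‖) := norm_pow_apply_sub_self_le (hpow s hs.le) z j
      _ ≤ j * (C * ((‖w‖ + 1) * s)) := by gcongr; exact hz s hs (hsj.trans_lt hjs₀)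
      _ = K * (j * s) := by ring
  have hyz' : (C + 1) * ‖y - z‖ < ε / 2 := by
    rw [← dist_eq_norm]
    calc (C + 1) * dist y z < (C + 1) * (ε / (2 * (C + 1))) := by gcongr
      _ = ε / 2 := by field_simp
  have hKjs : K * (j * s) < ε / 2 :=
    calc K * (j * s) ≤ K * (ε / (2 * (K + 1))) := by gcongr
      _ < (K + 1) * (ε / (2 * (K + 1))) := by gcongr; linarith
      _ = ε / 2 := by field_simp
  calc ‖(T ^ j) y - y‖ = ‖(T ^ j) (y - z) + ((T ^ j) z - z) + (z - y)‖ := by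
        rw [map_sub]; abel_nf
    _ ≤ ‖(T ^ j) (y - z)‖ + ‖(T ^ j) z - z‖ + ‖z - y‖ := norm_add₃_le
    _ ≤ C * ‖y - z‖ + K * (j * s) + ‖y - z‖ := by
        rw [norm_sub_rev z y]
        gcongr
        exact (T ^ j).le_of_opNorm_le (hpow s hs.le j) _
    _ < ε := by linarith

lemma exists_norm_powDiffQuot_sub_lt (hF0 : F 0 = 1) {C : ℝ}
    (hpow : ∀ s : ℝ, 0 ≤ s → ∀ j : ℕ, ‖F s ^ j‖ ≤ C)
    (hdense : Dense {ψ : E | ∃ y, DerivAtZero F ψ y})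
    {g y : E} (hg : DerivAtZero F g y) {ε : ℝ} (hε : 0 < ε) :
    ∃ δ > 0, ∀ s : ℝ, 0 < s → ∀ n : ℕ, n ≠ 0 → n * s < δ → ‖powDiffQuot (F s) s n g - y‖ < ε := by
  have hC : 0 ≤ C := (norm_nonneg _).trans (hpow 0 le_rfl 0)
  obtain ⟨δ₁, hδ₁, hquot⟩ := hg.exists_norm_sub_lt hF0 (by positivity : 0 < ε / (2 * (C + 1)))
  obtain ⟨δ₂, hδ₂, horbit⟩ := exists_norm_pow_apply_sub_self_lt hF0 hpow hdense y (half_pos hε)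
  refine ⟨min δ₁ δ₂, by positivity, fun s hs n hn hns => ?_⟩
  have hsn : s ≤ n * s :=
    le_mul_of_one_le_left hs.le (by exact_mod_cast Nat.one_le_iff_ne_zero.mpr hn)
  have hb : ∀ j < n, ‖(F s ^ j) y - y‖ < ε / 2 := fun j hj =>
    horbit s hs j <| lt_of_le_of_lt (by gcongr) (hns.trans_le (min_le_right _ _))
  have hq := hquot s hs (hsn.trans_lt (hns.trans_le (min_le_left _ _)))
  calc ‖powDiffQuot (F s) s n g - y‖ < C * ‖s⁻¹ • (F s g - g) - y‖ + ε / 2 :=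
        norm_powDiffQuot_sub_lt (hpow s hs.le) s hn hb
    _ ≤ (C + 1) * ‖s⁻¹ • (F s g - g) - y‖ + ε / 2 := by gcongr; linarith
    _ < (C + 1) * (ε / (2 * (C + 1))) + ε / 2 := by gcongr
    _ = ε := by field_simp; ring

end PowerBounded

theorem chernoff_lemma3_general (F : ℝ → (X →L[ℝ] X)) (M : ℝ)
    (hF : MemFClass F M 0) (t : ℝ) (ht : 0 < t) (g y : X)
    (hg : DerivAtZero F g y) :
    ∀ ε > 0, ∃ δ > 0, ∀ i l k : ℕ, 0 < i → 0 < l → 0 < k → i ≠ l →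
      0 < |(i : ℝ) - l| / k → |(i : ℝ) - l| / k < δ →
      ‖((k : ℝ) / (((i : ℝ) - l) * t)) • (((F (t / k)) ^ i) g - ((F (t / k)) ^ l) g)
          - ((F (t / k)) ^ (min i l)) y‖ < ε := by
  intro ε hε
  have hpow : ∀ s : ℝ, 0 ≤ s → ∀ j : ℕ, ‖F s ^ j‖ ≤ M := fun s hs => hF.norm_pow_le_s2 hs
  have hM : 0 ≤ M := (norm_nonneg _).trans (hpow 0 le_rfl 0)
  obtain ⟨δ, hδ, hquot⟩ :=
    exists_norm_powDiffQuot_sub_lt hF.1 hpow hF.2.2 hg (by positivity : 0 < ε / (M + 1))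
  refine ⟨δ / t, by positivity, fun i l k _ _ hk hil _ hlt => ?_⟩
  set s := t / k
  set n := ((i : ℤ) - l).natAbs
  have hs : 0 < s := by positivity
  have hns : (n : ℝ) * s < δ := by
    rw [lt_div_iff₀ ht] at hlt
    simpa [n, s, Nat.cast_natAbs, mul_div_assoc', div_mul_eq_mul_div] using hlt
  have hcoef : (k : ℝ) / (((i : ℝ) - l) * t) = (((i : ℝ) - l) * s)⁻¹ := by
    rw [← mul_div_assoc, inv_div]
  rw [hcoef, smul_pow_apply_sub_pow_apply_eq hil, ← map_sub]
  calc _ ≤ M * ‖powDiffQuot (F s) s n g - y‖ := (F s ^ min i l).le_of_opNorm_le (hpow s hs.le _) _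
    _ ≤ (M + 1) * ‖powDiffQuot (F s) s n g - y‖ := by gcongr; linarith
    _ < (M + 1) * (ε / (M + 1)) := by gcongr; exact hquot s hs n (by omega) hns
    _ = ε := by field_simp

/-- Lemma 3: for `F ∈ 𝓕^X_{M,0}`, `t > 0` and `g ∈ D(F'(0))`
with `F'(0)g = y`, one has
`(F(t/k)^i − F(t/k)^l)g/((i−l)t/k) − F(t/k)^{min(i,l)} y → 0` as `|i − l|/k → 0`. -/
theorem chernoff_lemma3 (F : ℝ → (X →L[ℝ] X)) (M : ℝ) (hM : 1 ≤ M)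
    (hF : MemFClass F M 0) (t : ℝ) (ht : 0 < t) (g y : X)
    (hg : DerivAtZero F g y) :
    ∀ ε > 0, ∃ δ > 0, ∀ i l k : ℕ, 0 < i → 0 < l → 0 < k → i ≠ l →
      0 < |(i : ℝ) - l| / k → |(i : ℝ) - l| / k < δ →
      ‖((k : ℝ) / (((i : ℝ) - l) * t)) • (((F (t / k)) ^ i) g - ((F (t / k)) ^ l) g)
          - ((F (t / k)) ^ (min i l)) y‖ < ε :=
  chernoff_lemma3_general F M hF t ht g y hg
end
end

section
/- Let X be a Banach space and F ∈ 𝓕_X. Then the operator F'(0) (with domain D(F'(0))) is closable: whenever f_n ∈ D(F'(0)), f_n → 0 in X and F'(0)f_n → h in X, then h = 0. -/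
/-!
For `τ > 0` and `T = F τ`, the operator `S = ∑_{k<n} Tᵏ` telescopes against difference quotients,
`S (τ⁻¹ (T u - u)) = τ⁻¹ (Tⁿ u - u)`, and the defining bound of `𝓕_{M,a}` bounds every `‖Tᵏ‖`,
`k ≤ n`, by `K = M e^{|a|}` as long as `nτ = s ≤ 1`. Comparing `n h` with `S h`, through a point `d`
of the domain near `h` on one side and through `y_j ≈ F'(0) f_j` on the other, gives, after
`n → ∞` with `τ = s / n`,
`‖h‖ ≤ (1 + K) ‖h - d‖ + s K ‖F'(0) d‖ + K ‖h - y_j‖ + (K + 1) s⁻¹ ‖f_j‖`.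
Letting `j → ∞` and then `s → 0` leaves `‖h‖ ≤ (1 + K) ‖h - d‖` on the dense domain of `F'(0)`,
hence `h = 0`.
-/

open Filter Topology MeasureTheory

noncomputable section

variable {X : Type*} [NormedAddCommGroup X] [NormedSpace ℝ X] [CompleteSpace X]

section PowerBounded

variable {E : Type*} [NormedAddCommGroup E] [NormedSpace ℝ E]

theorem geom_sum_apply_sub (T : E →L[ℝ] E) (n : ℕ) (x : E) :
    (∑ k ∈ Finset.range n, T ^ k) (T x - x) = (T ^ n) x - x := by
  simpa using congrArg (· x) (geom_sum_mul T n)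

variable {T : E →L[ℝ] E} {n : ℕ} {K : ℝ}

theorem norm_geom_sum_le_of_norm_pow_le (hT : ∀ k < n, ‖T ^ k‖ ≤ K) :
    ‖∑ k ∈ Finset.range n, T ^ k‖ ≤ n * K := by
  simpa using norm_sum_le_of_le _ fun k hk => hT k (Finset.mem_range.mp hk)

theorem norm_geom_sum_apply_sub_nsmul_le (hT : ∀ k < n, ‖T ^ k‖ ≤ K) (x : E) :
    ‖(∑ k ∈ Finset.range n, T ^ k) x - n • x‖ ≤ n * (n * K) * ‖T x - x‖ := by
  have hterm : ∀ k ∈ Finset.range n, ‖(T ^ k) x - x‖ ≤ n * K * ‖T x - x‖ := by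
    intro k hk
    have hkn := Finset.mem_range.mp hk
    have hK : 0 ≤ K := (norm_nonneg _).trans (hT 0 (by omega))
    rw [← geom_sum_apply_sub]
    calc ‖(∑ i ∈ Finset.range k, T ^ i) (T x - x)‖
        ≤ ‖∑ i ∈ Finset.range k, T ^ i‖ * ‖T x - x‖ := ContinuousLinearMap.le_opNorm _ _
      _ ≤ k * K * ‖T x - x‖ := by
        gcongr
        exact norm_geom_sum_le_of_norm_pow_le fun i hi => hT i (hi.trans hkn)
      _ ≤ n * K * ‖T x - x‖ := by gcongr
  calc ‖(∑ k ∈ Finset.range n, T ^ k) x - n • x‖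
      = ‖∑ k ∈ Finset.range n, ((T ^ k) x - x)‖ := by
        simp [Finset.sum_sub_distrib]
    _ ≤ ∑ _k ∈ Finset.range n, n * K * ‖T x - x‖ := norm_sum_le_of_le _ hterm
    _ = n * (n * K) * ‖T x - x‖ := by
        rw [Finset.sum_const, Finset.card_range, nsmul_eq_mul]; ring

theorem norm_nsmul_sub_geom_sum_apply_le (hT : ∀ k < n, ‖T ^ k‖ ≤ K) (x d : E) :
    ‖n • x - (∑ k ∈ Finset.range n, T ^ k) x‖ ≤
      n * ((1 + K) * ‖x - d‖ + n * K * ‖T d - d‖) := by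
  set S := ∑ k ∈ Finset.range n, T ^ k
  have hS : ‖S (d - x)‖ ≤ n * K * ‖x - d‖ := by
    grw [S.le_opNorm, norm_geom_sum_le_of_norm_pow_le hT, norm_sub_rev]
  calc ‖n • x - S x‖ = ‖n • (x - d) - (S d - n • d) + S (d - x)‖ := by
        rw [map_sub]; congr 1; module
    _ ≤ n * ‖x - d‖ + n * (n * K) * ‖T d - d‖ + n * K * ‖x - d‖ := by
        grw [norm_add_le, norm_sub_le, norm_nsmul_le, norm_geom_sum_apply_sub_nsmul_le hT, hS]
    _ = n * ((1 + K) * ‖x - d‖ + n * K * ‖T d - d‖) := by ring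

theorem norm_geom_sum_apply_le (hT : ∀ k ≤ n, ‖T ^ k‖ ≤ K) {τ : ℝ} (hτ : 0 ≤ τ) (x y f : E) :
    ‖(∑ k ∈ Finset.range n, T ^ k) x‖ ≤
      n * K * (‖x - y‖ + ‖y - τ⁻¹ • (T f - f)‖) + τ⁻¹ * ((K + 1) * ‖f‖) := by
  set S := ∑ k ∈ Finset.range n, T ^ k
  have hS : ‖S‖ ≤ n * K := norm_geom_sum_le_of_norm_pow_le fun k hk => hT k hk.le
  have hTn : ‖(T ^ n) f - f‖ ≤ (K + 1) * ‖f‖ := by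
    grw [norm_sub_le, (T ^ n).le_opNorm, hT n le_rfl]
    linarith
  calc ‖S x‖ = ‖S (x - y) + S (y - τ⁻¹ • (T f - f)) + τ⁻¹ • ((T ^ n) f - f)‖ := by
        rw [← geom_sum_apply_sub, ← map_smul, ← map_add, ← map_add]; congr 2; abel
    _ ≤ n * K * ‖x - y‖ + n * K * ‖y - τ⁻¹ • (T f - f)‖ + τ⁻¹ * ((K + 1) * ‖f‖) := by
        grw [norm_add_le, norm_add_le, S.le_opNorm, S.le_opNorm, hS, norm_smul, hTn,
          Real.norm_of_nonneg (inv_nonneg.mpr hτ)]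
    _ = _ := by ring

theorem norm_le_of_norm_pow_le (hT : ∀ k ≤ n, ‖T ^ k‖ ≤ K) (hn : 0 < n) {τ : ℝ} (hτ : 0 < τ)
    (x d y f : E) :
    ‖x‖ ≤ (1 + K) * ‖x - d‖ + n * τ * K * ‖τ⁻¹ • (T d - d)‖ + K * ‖x - y‖ +
      K * ‖y - τ⁻¹ • (T f - f)‖ + (K + 1) / (n * τ) * ‖f‖ := by
  have hn' : (0 : ℝ) < n := Nat.cast_pos.mpr hn
  have hsplit := norm_le_norm_add_norm_sub' (n • x) ((∑ k ∈ Finset.range n, T ^ k) x)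
  rw [RCLike.norm_nsmul ℝ, nsmul_eq_mul] at hsplit
  grw [norm_nsmul_sub_geom_sum_apply_le (fun k hk => hT k hk.le) x d,
    norm_geom_sum_apply_le hT hτ.le x y f] at hsplit
  rw [← mul_le_mul_iff_of_pos_left hn']
  refine hsplit.trans (le_of_eq ?_)
  rw [norm_smul, Real.norm_of_nonneg (inv_nonneg.mpr hτ.le)]
  field_simp
  ring

end PowerBounded

section StrongDerivative

variable {E : Type*} [NormedAddCommGroup E] [NormedSpace ℝ E] {F : ℝ → (E →L[ℝ] E)}

theorem MemFClass.norm_pow_le_s4 {M a : ℝ} (hF : MemFClass F M a) (hM : 1 ≤ M) {s : ℝ}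
    (hs : 0 ≤ s) (hs1 : s ≤ 1) {n k : ℕ} (hkn : k ≤ n) :
    ‖F (s / n) ^ k‖ ≤ M * Real.exp |a| := by
  have hMa : 1 ≤ M * Real.exp |a| :=
    one_le_mul_of_one_le_of_one_le hM (Real.one_le_exp (abs_nonneg a))
  rcases Nat.eq_zero_or_pos k with rfl | hk
  · rw [pow_zero, ContinuousLinearMap.one_def]
    exact ContinuousLinearMap.norm_id_le.trans hMa
  have hn : (0 : ℝ) < n := Nat.cast_pos.mpr (hk.trans_le hkn)
  have hks : k * s / n ≤ 1 := by
    rw [div_le_one hn]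
    nlinarith [(Nat.cast_le (α := ℝ)).mpr hkn]
  refine (hF.2.1 n k (hk.trans_le hkn) hk s hs).trans ?_
  gcongr
  calc a * k * s / n = a * (k * s / n) := by ring
    _ ≤ |a| * (k * s / n) := by gcongr; exact le_abs_self a
    _ ≤ |a| := mul_le_of_le_one_right (abs_nonneg a) hks

theorem tendsto_diffQuot_of_derivAtZero (hF0 : F 0 = 1) {x v : E} (hx : DerivAtZero F x v)
    {s : ℝ} (hs : 0 < s) :
    Tendsto (fun n : ℕ => (s / n)⁻¹ • (F (s / n) x - x)) atTop (𝓝 v) := by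
  have hsn : Tendsto (fun n : ℕ => s / n) atTop (𝓝[>] 0) :=
    tendsto_nhdsWithin_of_tendsto_nhds_of_eventually_within _
      (tendsto_const_div_atTop_nhds_zero_nat s)
      (eventually_gt_atTop 0 |>.mono fun n hn => div_pos hs (Nat.cast_pos.mpr hn))
  unfold DerivAtZero at hx
  rw [hF0] at hx
  exact hx.comp hsn

variable {K : ℝ}

theorem norm_le_of_derivAtZero (hF0 : F 0 = 1) {s : ℝ} (hs : 0 < s)
    (hK : ∀ n k : ℕ, k ≤ n → ‖F (s / n) ^ k‖ ≤ K) {d v f y : E}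
    (hd : DerivAtZero F d v) (hf : DerivAtZero F f y) (x : E) :
    ‖x‖ ≤ (1 + K) * ‖x - d‖ + s * K * ‖v‖ + K * ‖x - y‖ + (K + 1) / s * ‖f‖ := by
  set Q : E → ℕ → E := fun u n => (s / n)⁻¹ • (F (s / n) u - u)
  have hlim : Tendsto (fun n => (1 + K) * ‖x - d‖ + s * K * ‖Q d n‖ + K * ‖x - y‖ +
      K * ‖y - Q f n‖ + (K + 1) / s * ‖f‖) atTop
      (𝓝 ((1 + K) * ‖x - d‖ + s * K * ‖v‖ + K * ‖x - y‖ + K * ‖y - y‖ + (K + 1) / s * ‖f‖)) :=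
    ((((tendsto_const_nhds.add
      ((tendsto_diffQuot_of_derivAtZero hF0 hd hs).norm.const_mul _)).add tendsto_const_nhds).add
      ((tendsto_const_nhds.sub (tendsto_diffQuot_of_derivAtZero hF0 hf hs)).norm.const_mul _)).add
      tendsto_const_nhds)
  have hbound : ∀ᶠ n in atTop, ‖x‖ ≤ (1 + K) * ‖x - d‖ + s * K * ‖Q d n‖ + K * ‖x - y‖ +
      K * ‖y - Q f n‖ + (K + 1) / s * ‖f‖ := by
    filter_upwards [eventually_gt_atTop 0] with n hn
    have hτ : 0 < s / n := div_pos hs (Nat.cast_pos.mpr hn)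
    have := norm_le_of_norm_pow_le (hK n) hn hτ x d y f
    rwa [mul_div_cancel₀ s (Nat.cast_ne_zero.mpr hn.ne')] at this
  simpa using ge_of_tendsto hlim hbound

theorem eq_zero_of_tendsto_of_derivAtZero (hF0 : F 0 = 1)
    (hK : ∀ s, 0 < s → s ≤ 1 → ∀ n k : ℕ, k ≤ n → ‖F (s / n) ^ k‖ ≤ K)
    (hdense : Dense {ψ : E | ∃ y, DerivAtZero F ψ y}) {f y : ℕ → E} {h : E}
    (hdom : ∀ n, DerivAtZero F (f n) (y n)) (hf0 : Tendsto f atTop (𝓝 0))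
    (hyh : Tendsto y atTop (𝓝 h)) :
    h = 0 := by
  have hs_bound : ∀ s, 0 < s → s ≤ 1 → ∀ d v, DerivAtZero F d v →
      ‖h‖ ≤ (1 + K) * ‖h - d‖ + s * K * ‖v‖ := by
    intro s hs hs1 d v hd
    have hlim : Tendsto (fun j => (1 + K) * ‖h - d‖ + s * K * ‖v‖ + K * ‖h - y j‖ +
        (K + 1) / s * ‖f j‖) atTop
        (𝓝 ((1 + K) * ‖h - d‖ + s * K * ‖v‖ + K * ‖h - h‖ + (K + 1) / s * ‖(0 : E)‖)) :=
      (tendsto_const_nhds.add ((tendsto_const_nhds.sub hyh).norm.const_mul _)).add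
        (hf0.norm.const_mul _)
    simpa using ge_of_tendsto' hlim fun j =>
      norm_le_of_derivAtZero hF0 hs (hK s hs hs1) hd (hdom j) h
  have hd_bound : ∀ d ∈ {ψ : E | ∃ y, DerivAtZero F ψ y}, ‖h‖ ≤ (1 + K) * ‖h - d‖ := by
    rintro d ⟨v, hd⟩
    have hlim : Tendsto (fun s => (1 + K) * ‖h - d‖ + s * K * ‖v‖) (𝓝[>] 0)
        (𝓝 ((1 + K) * ‖h - d‖ + 0 * K * ‖v‖)) :=
      ((Continuous.tendsto (by fun_prop) 0)).mono_left nhdsWithin_le_nhds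
    have hbound : ∀ᶠ s in 𝓝[>] 0, ‖h‖ ≤ (1 + K) * ‖h - d‖ + s * K * ‖v‖ := by
      filter_upwards [Ioc_mem_nhdsGT zero_lt_one] with s hs
      exact hs_bound s hs.1 hs.2 d v hd
    simpa using ge_of_tendsto hlim hbound
  simpa using hdense.induction (P := fun d => ‖h‖ ≤ (1 + K) * ‖h - d‖) hd_bound
    (isClosed_le continuous_const (by fun_prop)) h

end StrongDerivative

/-- Proposition 2: for `F ∈ 𝓕_X` the operator `F'(0)` is closable. -/
theorem chernoff_prop2 (F : ℝ → (X →L[ℝ] X)) (hF : MemF F)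
    (f y : ℕ → X) (h : X)
    (hdom : ∀ n : ℕ, DerivAtZero F (f n) (y n))
    (hf0 : Tendsto f atTop (𝓝 (0 : X)))
    (hyh : Tendsto y atTop (𝓝 h)) :
    h = 0 := by
  obtain ⟨M, hM, a, hFMa⟩ := hF
  exact eq_zero_of_tendsto_of_derivAtZero hFMa.1
    (fun s hs hs1 _ _ hkn => hFMa.norm_pow_le_s4 hM hs.le hs1 hkn) hFMa.2.2 hdom hf0 hyh
end
end
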